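/- arXiv:2007.10218 — 2 statements merged into one kernel-verified Lean document; each statement's English description precedes it below -/
import Mathlib

section
/- Define K₂(t,ρ) = ∫_ρ^∞ e^{(3/4)t} K₃(t,s) sinh(s) (cosh s - cosh ρ)^{-1/2} ds for t > 0 and ρ > 0, where K₃(t,s) = (4πt)^{-3/2} (s/sinh s) e^{-t - s²/(4t)}. Then for every t > 0 and every ρ > 0, the derivative in ρ of K₂ is given by differentiation under the integral sign: ∂_ρ K₂(t,ρ) = ∫_ρ^∞ e^{(3/4)t} (∂_s K₃)(t,s) sinh(ρ) (cosh s - cosh ρ)^{-1/2} ds. -/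
open Real MeasureTheory

/-- The heat kernel of 3-dimensional hyperbolic space. -/
noncomputable def K₃ (t s : ℝ) : ℝ :=
  (4 * π * t) ^ (-(3 : ℝ) / 2) * (s / Real.sinh s) * Real.exp (-t - s ^ 2 / (4 * t))

/-- The heat kernel of 2-dimensional hyperbolic space, defined from `K₃` via the
Davies–Mandouvalos integral recurrence. -/
noncomputable def K₂ (t ρ : ℝ) : ℝ :=
  ∫ s in Set.Ioi ρ,
    Real.exp ((3 / 4) * t) * K₃ t s * Real.sinh s *
      (Real.cosh s - Real.cosh ρ) ^ (-(1 : ℝ) / 2)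

/-!
The substitution `cosh s = cosh r + x ^ 2`, `s = s_r x`, turns `K₂ t r` into
`2 e^{3t/4} ∫_{x > 0} K₃ t (s_r x) dx`, an integral over a fixed domain with a regular
integrand. Since `∂_r s_r x = sinh r / sinh (s_r x) ∈ (0, 1]`, since `K₃ t` and `∂_s K₃ t`
decay like `e^{-s}` away from `s = 0`, and since `e^{-s_r x} ≤ (1 + x ^ 2)⁻¹`, differentiation
under the integral sign is dominated by `(1 + x ^ 2)⁻¹`. Undoing the substitution in the
differentiated integral gives the claim.
-/

open Set Filter Topology

/-- The substitution `cosh s = cosh r + x ^ 2`, which turns the integrable singularity of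
`(cosh s - cosh r) ^ (-1/2)` at `s = r` into a smooth integrand on `x > 0`. -/
noncomputable def abelSubst (r x : ℝ) : ℝ := arcosh (x ^ 2 + cosh r)

lemma one_le_sq_add_cosh (r x : ℝ) : 1 ≤ x ^ 2 + cosh r := by
  nlinarith [one_le_cosh r, sq_nonneg x]

lemma one_lt_sq_add_cosh {r x : ℝ} (h : x ≠ 0 ∨ r ≠ 0) : 1 < x ^ 2 + cosh r := by
  rcases h with hx | hr
  · nlinarith [one_le_cosh r, pow_pos (abs_pos.2 hx) 2, sq_abs x]
  · nlinarith [one_lt_cosh.2 hr, sq_nonneg x]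

lemma cosh_abelSubst (r x : ℝ) : cosh (abelSubst r x) = x ^ 2 + cosh r :=
  cosh_arcosh (one_le_sq_add_cosh r x)

lemma sinh_abelSubst (r x : ℝ) : sinh (abelSubst r x) = √((x ^ 2 + cosh r) ^ 2 - 1) :=
  sinh_arcosh (one_le_sq_add_cosh r x)

lemma abelSubst_pos {r x : ℝ} (h : x ≠ 0 ∨ r ≠ 0) : 0 < abelSubst r x :=
  arcosh_pos (one_lt_sq_add_cosh h)

lemma le_abelSubst (r x : ℝ) : r ≤ abelSubst r x := by
  refine (le_abs_self r).trans ?_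
  rw [← arcosh_cosh (abs_nonneg r), cosh_abs, abelSubst,
    arcosh_le_arcosh (cosh_pos r) (by positivity)]
  nlinarith [sq_nonneg x]

lemma abelSubst_zero {r : ℝ} (hr : 0 ≤ r) : abelSubst r 0 = r := by
  simp [abelSubst, arcosh_cosh hr]

lemma continuous_abelSubst (r : ℝ) : Continuous (abelSubst r) :=
  continuousOn_arcosh.comp_continuous (by fun_prop) fun x => one_le_sq_add_cosh r x

lemma strictMonoOn_abelSubst (r : ℝ) : StrictMonoOn (abelSubst r) (Ici 0) := by
  intro a ha b hb hab
  rw [abelSubst, abelSubst, arcosh_lt_arcosh (by positivity) (by positivity)]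
  have : a ^ 2 < b ^ 2 := pow_lt_pow_left₀ hab ha two_ne_zero
  linarith

lemma image_abelSubst_Ioi {r : ℝ} (hr : 0 ≤ r) : abelSubst r '' Ioi 0 = Ioi r := by
  ext s
  constructor
  · rintro ⟨x, hx, rfl⟩
    simpa [abelSubst_zero hr] using
      strictMonoOn_abelSubst r self_mem_Ici (Ioi_subset_Ici_self hx) hx
  · intro (hs : r < s)
    have hcosh : cosh r < cosh s := by
      rw [cosh_lt_cosh, abs_of_nonneg hr, abs_of_nonneg (hr.trans hs.le)]
      exact hs
    refine ⟨√(cosh s - cosh r), sqrt_pos.2 (sub_pos.2 hcosh), ?_⟩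
    rw [abelSubst, sq_sqrt (sub_pos.2 hcosh).le, sub_add_cancel, arcosh_cosh (hr.trans hs.le)]

lemma hasDerivAt_abelSubst {r x : ℝ} (hx : x ≠ 0) :
    HasDerivAt (abelSubst r) (2 * x / sinh (abelSubst r x)) x := by
  have := (hasDerivAt_arcosh (one_lt_sq_add_cosh (.inl hx))).comp x
    ((hasDerivAt_pow 2 x).add_const (cosh r))
  refine this.congr_deriv ?_
  rw [sinh_abelSubst]
  simp [div_eq_mul_inv, mul_comm]

lemma hasDerivAt_abelSubst_left {r : ℝ} (x : ℝ) (hr : r ≠ 0) :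
    HasDerivAt (fun r => abelSubst r x) (sinh r / sinh (abelSubst r x)) r := by
  have := (hasDerivAt_arcosh (one_lt_sq_add_cosh (.inr hr))).comp r
    ((hasDerivAt_cosh r).const_add (x ^ 2))
  refine this.congr_deriv ?_
  rw [sinh_abelSubst, div_eq_mul_inv, mul_comm]

lemma exp_neg_abelSubst_le (r x : ℝ) : exp (-abelSubst r x) ≤ (1 + x ^ 2)⁻¹ := by
  have hφ : 0 ≤ abelSubst r x := arcosh_nonneg (one_le_sq_add_cosh r x)
  rw [exp_neg]
  refine inv_anti₀ (by positivity) ?_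
  calc 1 + x ^ 2 ≤ cosh (abelSubst r x) := by rw [cosh_abelSubst]; linarith [one_le_cosh r]
    _ ≤ exp (abelSubst r x) := by
      rw [cosh_eq]; linarith [exp_le_exp.2 (neg_le_self hφ)]

lemma sq_rpow_neg_half {x : ℝ} (hx : 0 ≤ x) : (x ^ 2) ^ (-(1 : ℝ) / 2) = x⁻¹ := by
  rw [show -(1 : ℝ) / 2 = -(1 / 2) by norm_num, rpow_neg (sq_nonneg x), ← sqrt_eq_rpow,
    sqrt_sq hx]

theorem setIntegral_Ioi_mul_rpow_cosh_sub_eq {r : ℝ} (hr : 0 ≤ r) (g : ℝ → ℝ) :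
    ∫ s in Ioi r, g s * (cosh s - cosh r) ^ (-(1 : ℝ) / 2) =
      ∫ x in Ioi 0, 2 * g (abelSubst r x) / sinh (abelSubst r x) := by
  rw [← image_abelSubst_Ioi hr, integral_image_eq_integral_abs_deriv_smul measurableSet_Ioi
    (fun x hx => (hasDerivAt_abelSubst (ne_of_gt hx)).hasDerivWithinAt)
    ((strictMonoOn_abelSubst r).injOn.mono Ioi_subset_Ici_self)]
  refine setIntegral_congr_fun measurableSet_Ioi fun x (hx : 0 < x) => ?_
  have hsinh : 0 < sinh (abelSubst r x) := sinh_pos_iff.2 (abelSubst_pos (.inl hx.ne'))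
  rw [smul_eq_mul, cosh_abelSubst, add_sub_cancel_right, sq_rpow_neg_half hx.le,
    abs_of_pos (by positivity)]
  field_simp

lemma abs_comp_abelSubst_le {F : ℝ → ℝ} {c C r : ℝ} (hcr : c ≤ r)
    (hF : ∀ s ≥ c, |F s| ≤ C * exp (-s)) (x : ℝ) :
    |F (abelSubst r x)| ≤ C * (1 + x ^ 2)⁻¹ := by
  have hC : 0 ≤ C := nonneg_of_mul_nonneg_left ((abs_nonneg _).trans (hF c le_rfl)) (exp_pos _)
  exact (hF _ (hcr.trans (le_abelSubst r x))).trans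
    (mul_le_mul_of_nonneg_left (exp_neg_abelSubst_le r x) hC)

theorem hasDerivAt_integral_comp_abelSubst {F F' : ℝ → ℝ} {c ρ C C' : ℝ} (hc : 0 < c)
    (hcρ : c < ρ) (hF : ∀ s > c, HasDerivAt F (F' s) s) (hF' : ContinuousOn F' (Ioi c))
    (hF_le : ∀ s ≥ c, |F s| ≤ C * exp (-s)) (hF'_le : ∀ s ≥ c, |F' s| ≤ C' * exp (-s)) :
    HasDerivAt (fun r => ∫ x in Ioi 0, F (abelSubst r x))
      (∫ x in Ioi 0, F' (abelSubst ρ x) * (sinh ρ / sinh (abelSubst ρ x))) ρ := by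
  have hmaps : ∀ r ∈ Ioi c, ∀ x, abelSubst r x ∈ Ioi c := fun r hr x =>
    lt_of_lt_of_le hr (le_abelSubst r x)
  have hcomp : ∀ {G : ℝ → ℝ}, ContinuousOn G (Ioi c) → ∀ r ∈ Ioi c,
      Continuous fun x => G (abelSubst r x) := fun hG r hr =>
    hG.comp_continuous (continuous_abelSubst r) (hmaps r hr)
  have hF_cont : ContinuousOn F (Ioi c) := fun s hs => (hF s hs).continuousAt.continuousWithinAt
  have hsinh : ∀ r ∈ Ioi c, ∀ x, 0 < sinh (abelSubst r x) := fun r hr x =>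
    sinh_pos_iff.2 (hc.trans (hmaps r hr x))
  refine (hasDerivAt_integral_of_dominated_loc_of_deriv_le (μ := volume.restrict (Ioi 0))
    (F := fun r x => F (abelSubst r x))
    (F' := fun r x => F' (abelSubst r x) * (sinh r / sinh (abelSubst r x)))
    (bound := fun x => C' * (1 + x ^ 2)⁻¹)
    (Ioi_mem_nhds hcρ) ?_ ?_ ?_ ?_ ?_ ?_).2
  · exact eventually_of_mem (Ioi_mem_nhds hcρ) fun r hr =>
      (hcomp hF_cont r hr).aestronglyMeasurable
  · exact (integrable_inv_one_add_sq.integrableOn.const_mul C).mono'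
      (hcomp hF_cont ρ hcρ).aestronglyMeasurable
      (ae_of_all _ fun x => abs_comp_abelSubst_le hcρ.le hF_le x)
  · refine ((hcomp hF' ρ hcρ).mul (continuous_const.div ?_ fun x => (hsinh ρ hcρ x).ne'))
      |>.aestronglyMeasurable
    exact continuous_sinh.comp (continuous_abelSubst ρ)
  · refine ae_of_all _ fun x r (hr : c < r) => ?_
    have hr0 : 0 < r := hc.trans hr
    have hratio : |sinh r / sinh (abelSubst r x)| ≤ 1 := by
      rw [abs_of_pos (div_pos (sinh_pos_iff.2 hr0) (hsinh r hr x)), div_le_one (hsinh r hr x)]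
      exact sinh_le_sinh.2 (le_abelSubst r x)
    rw [norm_mul, norm_eq_abs, norm_eq_abs]
    simpa using mul_le_mul (abs_comp_abelSubst_le hr.le hF'_le x) hratio (abs_nonneg _)
      ((abs_nonneg _).trans (abs_comp_abelSubst_le hr.le hF'_le x))
  · exact integrable_inv_one_add_sq.integrableOn.const_mul C'
  · exact ae_of_all _ fun x r (hr : c < r) =>
      (hF _ (hmaps r hr x)).comp r (hasDerivAt_abelSubst_left x (hc.trans hr).ne')

noncomputable def K₃' (t s : ℝ) : ℝ :=
  (4 * π * t) ^ (-(3 : ℝ) / 2) *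
    ((sinh s - s * cosh s) / sinh s ^ 2 - s / (2 * t) * (s / sinh s)) *
      exp (-t - s ^ 2 / (4 * t))

lemma hasDerivAt_K₃ (t : ℝ) {s : ℝ} (hs : s ≠ 0) : HasDerivAt (K₃ t) (K₃' t s) s := by
  have hsinh : sinh s ≠ 0 := sinh_ne_zero.2 hs
  have hq := (hasDerivAt_id s).div (hasDerivAt_sinh s) hsinh
  have hg := (((hasDerivAt_pow 2 s).div_const (4 * t)).const_sub (-t)).exp
  refine ((hq.const_mul ((4 * π * t) ^ (-(3 : ℝ) / 2))).mul hg).congr_deriv ?_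
  simp only [K₃', Pi.div_apply, id, Nat.cast_ofNat]
  field_simp
  ring

lemma continuousOn_K₃' (t : ℝ) : ContinuousOn (K₃' t) (Ioi 0) := fun s (hs : 0 < s) => by
  have : sinh s ≠ 0 := (sinh_pos_iff.2 hs).ne'
  unfold K₃'
  fun_prop (disch := simpa)

lemma abs_div_sinh_le_one (s : ℝ) : |s / sinh s| ≤ 1 := by
  rw [abs_div, abs_sinh]
  exact div_le_one_of_le₀ (self_le_sinh_iff.2 (abs_nonneg s)) (sinh_nonneg_iff.2 (abs_nonneg s))

lemma exp_neg_sub_sq_div_le {t : ℝ} (ht : 0 < t) (s : ℝ) :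
    exp (-t - s ^ 2 / (4 * t)) ≤ exp (3 * t) * exp (-(2 * s)) := by
  rw [← exp_add, exp_le_exp]
  have hsq : 0 ≤ (s - 4 * t) ^ 2 / (4 * t) := by positivity
  have : (s - 4 * t) ^ 2 / (4 * t) = s ^ 2 / (4 * t) - 2 * s + 4 * t := by
    field_simp
    ring
  linarith

lemma add_mul_mul_exp_neg_two_mul_le {a b s : ℝ} (ha : 0 ≤ a) (hb : 0 ≤ b) (hs : 0 ≤ s) :
    (a + b * s) * exp (-(2 * s)) ≤ (a + b) * exp (-s) := by
  have hexp : exp (-(2 * s)) = exp (-s) * exp (-s) := by rw [← exp_add]; ring_nf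
  have h1 : exp (-s) ≤ 1 := exp_le_one_iff.2 (neg_nonpos.2 hs)
  have h2 : s * exp (-s) ≤ 1 := by
    rw [exp_neg, ← div_eq_mul_inv, div_le_one (exp_pos s)]
    linarith [add_one_le_exp s]
  rw [hexp]
  nlinarith [exp_pos (-s), mul_le_mul_of_nonneg_left h1 ha, mul_le_mul_of_nonneg_left h2 hb]

lemma abs_K₃_le {t s : ℝ} (ht : 0 < t) (hs : 0 ≤ s) :
    |K₃ t s| ≤ (4 * π * t) ^ (-(3 : ℝ) / 2) * exp (3 * t) * exp (-s) := by
  have hA : 0 < (4 * π * t) ^ (-(3 : ℝ) / 2) := by positivity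
  rw [K₃, abs_mul, abs_mul, abs_of_pos hA, abs_of_pos (exp_pos _), mul_assoc,
    mul_assoc _ (exp _)]
  refine mul_le_mul_of_nonneg_left ?_ hA.le
  calc |s / sinh s| * exp (-t - s ^ 2 / (4 * t)) ≤ 1 * (exp (3 * t) * exp (-(2 * s))) :=
        mul_le_mul (abs_div_sinh_le_one s) (exp_neg_sub_sq_div_le ht s) (exp_pos _).le zero_le_one
    _ ≤ exp (3 * t) * exp (-s) := by
        rw [one_mul]
        exact mul_le_mul_of_nonneg_left (exp_le_exp.2 (by linarith)) (exp_pos _).le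

lemma abs_sinh_sub_mul_cosh_div_sq_le {c s : ℝ} (hc : 0 < c) (hcs : c ≤ s) :
    |(sinh s - s * cosh s) / sinh s ^ 2| ≤ 1 + 2 / sinh c := by
  have hs : 0 < s := hc.trans_le hcs
  have hσ : 0 < sinh s := sinh_pos_iff.2 hs
  have hσc : 0 < sinh c := sinh_pos_iff.2 hc
  have hσcs : sinh c ≤ sinh s := sinh_le_sinh.2 hcs
  have hcosh : cosh s ≤ 1 + sinh s := by
    linarith [cosh_sub_sinh s, exp_le_one_iff.2 (neg_nonpos.2 hs.le)]
  have hsσ : s ≤ sinh s := self_le_sinh_iff.2 hs.le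
  have hnum : |sinh s - s * cosh s| ≤ sinh s + sinh s * (1 + sinh s) := by
    rw [abs_le]
    constructor <;> nlinarith [cosh_pos s]
  have h2 : 2 * sinh s ≤ 2 / sinh c * sinh s ^ 2 := by
    rw [div_mul_eq_mul_div, le_div_iff₀ hσc]
    nlinarith
  rw [abs_div, abs_of_pos (pow_pos hσ 2), div_le_iff₀ (pow_pos hσ 2)]
  nlinarith

lemma abs_K₃'_le {t c s : ℝ} (ht : 0 < t) (hc : 0 < c) (hcs : c ≤ s) :
    |K₃' t s| ≤ (4 * π * t) ^ (-(3 : ℝ) / 2) * exp (3 * t) *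
      (1 + 2 / sinh c + 1 / (2 * t)) * exp (-s) := by
  have hs : 0 ≤ s := hc.le.trans hcs
  have hA : 0 < (4 * π * t) ^ (-(3 : ℝ) / 2) := by positivity
  have hM : 0 ≤ 1 + 2 / sinh c := by have := sinh_pos_iff.2 hc; positivity
  have hbracket : |(sinh s - s * cosh s) / sinh s ^ 2 - s / (2 * t) * (s / sinh s)| ≤
      (1 + 2 / sinh c) + 1 / (2 * t) * s := by
    refine (abs_sub _ _).trans (add_le_add (abs_sinh_sub_mul_cosh_div_sq_le hc hcs) ?_)
    rw [abs_mul, abs_of_nonneg (by positivity : 0 ≤ s / (2 * t)), one_div_mul_eq_div]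
    simpa using mul_le_mul_of_nonneg_left (abs_div_sinh_le_one s)
      (by positivity : 0 ≤ s / (2 * t))
  calc |K₃' t s|
      = (4 * π * t) ^ (-(3 : ℝ) / 2) *
          |(sinh s - s * cosh s) / sinh s ^ 2 - s / (2 * t) * (s / sinh s)| *
          exp (-t - s ^ 2 / (4 * t)) := by
        rw [K₃', abs_mul, abs_mul, abs_of_pos hA, abs_of_pos (exp_pos _)]
    _ ≤ (4 * π * t) ^ (-(3 : ℝ) / 2) * ((1 + 2 / sinh c) + 1 / (2 * t) * s) *
          (exp (3 * t) * exp (-(2 * s))) := by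
        gcongr
        exact exp_neg_sub_sq_div_le ht s
    _ = (4 * π * t) ^ (-(3 : ℝ) / 2) * exp (3 * t) *
          (((1 + 2 / sinh c) + 1 / (2 * t) * s) * exp (-(2 * s))) := by ring
    _ ≤ (4 * π * t) ^ (-(3 : ℝ) / 2) * exp (3 * t) *
          ((1 + 2 / sinh c + 1 / (2 * t)) * exp (-s)) :=
        mul_le_mul_of_nonneg_left (add_mul_mul_exp_neg_two_mul_le hM (by positivity) hs)
          (by positivity)
    _ = _ := by ring

lemma K₂_eq_integral_abelSubst (t : ℝ) {r : ℝ} (hr : 0 ≤ r) :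
    K₂ t r = 2 * exp (3 / 4 * t) * ∫ x in Ioi 0, K₃ t (abelSubst r x) := by
  rw [K₂, setIntegral_Ioi_mul_rpow_cosh_sub_eq hr (fun s => exp (3 / 4 * t) * K₃ t s * sinh s),
    ← integral_const_mul]
  refine setIntegral_congr_fun measurableSet_Ioi fun x (hx : 0 < x) => ?_
  have : sinh (abelSubst r x) ≠ 0 := (sinh_pos_iff.2 (abelSubst_pos (.inl hx.ne'))).ne'
  field_simp

theorem stmt_16 (t : ℝ) (ht : 0 < t) (ρ : ℝ) (hρ : 0 < ρ) :
    deriv (fun r => K₂ t r) ρ =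
      ∫ s in Set.Ioi ρ,
        Real.exp ((3 / 4) * t) * deriv (fun u => K₃ t u) s * Real.sinh ρ *
          (Real.cosh s - Real.cosh ρ) ^ (-(1 : ℝ) / 2) := by
  have hc : 0 < ρ / 2 := half_pos hρ
  have hK₂ : (fun r => K₂ t r) =ᶠ[𝓝 ρ]
      fun r => 2 * exp (3 / 4 * t) * ∫ x in Ioi 0, K₃ t (abelSubst r x) :=
    eventually_of_mem (Ioi_mem_nhds hρ) fun r hr => K₂_eq_integral_abelSubst t (le_of_lt hr)
  have hderiv := (hasDerivAt_integral_comp_abelSubst hc (half_lt_self hρ)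
    (fun s hs => hasDerivAt_K₃ t (hc.trans hs).ne')
    ((continuousOn_K₃' t).mono (Ioi_subset_Ioi hc.le))
    (fun s hs => abs_K₃_le ht (hc.le.trans hs)) (fun s hs => abs_K₃'_le ht hc hs)).const_mul
    (2 * exp (3 / 4 * t))
  have hrhs : ∫ s in Ioi ρ, exp (3 / 4 * t) * deriv (K₃ t) s * sinh ρ *
        (cosh s - cosh ρ) ^ (-(1 : ℝ) / 2) =
      ∫ s in Ioi ρ, exp (3 / 4 * t) * K₃' t s * sinh ρ *
        (cosh s - cosh ρ) ^ (-(1 : ℝ) / 2) :=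
    setIntegral_congr_fun measurableSet_Ioi fun s (hs : ρ < s) => by
      rw [(hasDerivAt_K₃ t (hρ.trans hs).ne').deriv]
  rw [hK₂.deriv_eq, hderiv.deriv, hrhs,
    setIntegral_Ioi_mul_rpow_cosh_sub_eq hρ.le (fun s => exp (3 / 4 * t) * K₃' t s * sinh ρ),
    ← integral_const_mul]
  refine setIntegral_congr_fun measurableSet_Ioi fun x _ => ?_
  ring
end

section
/- Define K₂(t,ρ) = ∫_ρ^∞ e^{(3/4)t} K₃(t,s) sinh(s) (cosh s - cosh ρ)^{-1/2} ds for t > 0 and ρ > 0, where K₃(t,s) = (4πt)^{-3/2} (s/sinh s) e^{-t - s²/(4t)}. Then for every t > 0 and every ρ > 0, ∂²_ρ K₂(t,ρ) - coth(ρ) ∂_ρ K₂(t,ρ) = ∫_ρ^∞ e^{(3/4)t} (∂²_s K₃(t,s) - coth(s) ∂_s K₃(t,s)) · (sinh²(ρ)/sinh(s)) · (cosh s - cosh ρ)^{-1/2} ds. -/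
open Real MeasureTheory

/-!
In the variable `c = cosh s` the kernel is `K₃ t s = C k(cosh s)` with an explicit profile
`k = k₃ t`, and the radial operator `∂² - coth ∂` becomes `sinh² · d²/dc²`. The substitution
`v = √(cosh s - cosh ρ)` turns `K₂ t ρ` into `2 e^(3t/4) C ∫₀^∞ k(cosh ρ + v²) dv`, a translation
in `c`, which may be differentiated twice under the integral sign because the Gaussian factor of
`k` beats every power of `c`. Both sides of the identity then equal
`2 e^(3t/4) C sinh²ρ ∫₀^∞ k''(cosh ρ + v²) dv`.
-/

open Set

theorem hasDerivAt_of_comp_cosh {F f f' : ℝ → ℝ} (hF : ∀ s > 0, F s = f (cosh s))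
    (hf : ∀ c > 1, HasDerivAt f (f' c) c) {r : ℝ} (hr : 0 < r) :
    HasDerivAt F (f' (cosh r) * sinh r) r := by
  have hcomp := (hf (cosh r) (one_lt_cosh.2 hr.ne')).comp r (hasDerivAt_cosh r)
  refine hcomp.congr_of_eventuallyEq ?_
  filter_upwards [Ioi_mem_nhds hr] with s hs using hF s hs

theorem deriv_deriv_sub_coth_mul_deriv_of_comp_cosh {F f f' f'' : ℝ → ℝ}
    (hF : ∀ s > 0, F s = f (cosh s)) (hf : ∀ c > 1, HasDerivAt f (f' c) c)
    (hf' : ∀ c > 1, HasDerivAt f' (f'' c) c) {r : ℝ} (hr : 0 < r) :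
    deriv (deriv F) r - cosh r / sinh r * deriv F r = f'' (cosh r) * sinh r ^ 2 := by
  have hderiv : ∀ s > 0, deriv F s = f' (cosh s) * sinh s := fun s hs =>
    (hasDerivAt_of_comp_cosh hF hf hs).deriv
  have hderiv2 := (hasDerivAt_of_comp_cosh (fun _ _ => rfl) hf' hr).mul (hasDerivAt_sinh r)
  rw [(hderiv2.congr_of_eventuallyEq _).deriv, hderiv r hr]
  · field_simp [(sinh_pos_iff.2 hr).ne']
    ring
  · filter_upwards [Ioi_mem_nhds hr] with s hs using hderiv s hs

theorem rpow_neg_one_div_two_eq_inv_sqrt {x : ℝ} (hx : 0 ≤ x) :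
    x ^ (-(1 : ℝ) / 2) = (√x)⁻¹ := by
  rw [neg_div, rpow_neg hx, sqrt_eq_rpow]

theorem cosh_lt_cosh_of_lt {ρ s : ℝ} (hρ : 0 ≤ ρ) (hs : ρ < s) : cosh ρ < cosh s :=
  cosh_strictMonoOn hρ (hρ.trans hs.le) hs

theorem image_sqrt_cosh_sub_cosh_Ioi {ρ : ℝ} (hρ : 0 ≤ ρ) :
    (fun s => √(cosh s - cosh ρ)) '' Ioi ρ = Ioi 0 := by
  ext v
  constructor
  · rintro ⟨s, hs, rfl⟩
    exact sqrt_pos.2 (sub_pos.2 (cosh_lt_cosh_of_lt hρ hs))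
  · intro hv
    have hv : 0 < v := hv
    refine ⟨arcosh (cosh ρ + v ^ 2), ?_, ?_⟩
    · calc ρ = arcosh (cosh ρ) := (arcosh_cosh hρ).symm
        _ < arcosh (cosh ρ + v ^ 2) :=
          (arcosh_lt_arcosh (cosh_pos ρ) (by positivity)).2 (by nlinarith)
    · have h1 : 1 ≤ cosh ρ + v ^ 2 := by nlinarith [one_le_cosh ρ]
      dsimp only
      rw [cosh_arcosh h1, add_sub_cancel_left, sqrt_sq hv.le]

theorem injOn_sqrt_cosh_sub_cosh {ρ : ℝ} (hρ : 0 ≤ ρ) :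
    InjOn (fun s => √(cosh s - cosh ρ)) (Ioi ρ) := by
  intro x hx y hy hxy
  have hx' := (cosh_lt_cosh_of_lt hρ hx).le
  have hy' := (cosh_lt_cosh_of_lt hρ hy).le
  have := (sqrt_inj (sub_nonneg.2 hx') (sub_nonneg.2 hy')).1 hxy
  exact cosh_injOn (hρ.trans hx.le) (hρ.trans hy.le) (by linarith)

/-- `√π / 2` times the Weyl fractional integral `∫_x^∞ f y (y - x)^(-1/2) dy` of order `1/2`,
written in the variable `v = √(y - x)`. -/
noncomputable def halfWeyl (f : ℝ → ℝ) (x : ℝ) : ℝ := ∫ v in Ioi 0, f (x + v ^ 2)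

theorem integral_comp_cosh_mul_sinh_mul_rpow (g : ℝ → ℝ) {ρ : ℝ} (hρ : 0 ≤ ρ) :
    ∫ s in Ioi ρ, g (cosh s) * sinh s * (cosh s - cosh ρ) ^ (-(1 : ℝ) / 2) =
      2 * halfWeyl g (cosh ρ) := by
  have hpos : ∀ s ∈ Ioi ρ, 0 < cosh s - cosh ρ := fun s hs =>
    sub_pos.2 (cosh_lt_cosh_of_lt hρ hs)
  have hderiv : ∀ s ∈ Ioi ρ, HasDerivWithinAt (fun s => √(cosh s - cosh ρ))
      (sinh s / (2 * √(cosh s - cosh ρ))) (Ioi ρ) s := fun s hs =>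
    (((hasDerivAt_cosh s).sub_const _).sqrt (hpos s hs).ne').hasDerivWithinAt
  rw [halfWeyl, ← integral_const_mul, ← image_sqrt_cosh_sub_cosh_Ioi hρ,
    integral_image_eq_integral_abs_deriv_smul measurableSet_Ioi hderiv
      (injOn_sqrt_cosh_sub_cosh hρ)]
  refine setIntegral_congr_fun measurableSet_Ioi fun s hs => ?_
  have hsinh : 0 < sinh s := sinh_pos_iff.2 (hρ.trans_lt hs)
  have hsqrt : 0 < √(cosh s - cosh ρ) := sqrt_pos.2 (hpos s hs)
  rw [smul_eq_mul, abs_of_pos (by positivity), sq_sqrt (hpos s hs).le, add_sub_cancel,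
    rpow_neg_one_div_two_eq_inv_sqrt (hpos s hs).le]
  field_simp

def DecaysLikeInv (f : ℝ → ℝ) : Prop := ∀ b > 1, ∃ D, ∀ c ≥ b, |f c| ≤ D / c

theorem abs_comp_add_sq_le_of_le_div {g : ℝ → ℝ} {b D : ℝ} (hb : 1 < b)
    (hD : ∀ c ≥ b, |g c| ≤ D / c) {y : ℝ} (hy : b ≤ y) (v : ℝ) :
    |g (y + v ^ 2)| ≤ D * (1 + v ^ 2)⁻¹ := by
  have hD₀ : 0 ≤ D := by
    have := (abs_nonneg _).trans (hD b le_rfl)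
    exact (div_nonneg_iff.1 this).elim (·.1) fun h => absurd h.2 (by linarith)
  calc |g (y + v ^ 2)| ≤ D / (y + v ^ 2) := hD _ (by nlinarith)
    _ ≤ D / (1 + v ^ 2) := by gcongr; linarith
    _ = D * (1 + v ^ 2)⁻¹ := div_eq_mul_inv _ _

theorem hasDerivAt_halfWeyl {f f' : ℝ → ℝ} (hf : ∀ c > 1, HasDerivAt f (f' c) c)
    (hf_decay : DecaysLikeInv f) (hf'_decay : DecaysLikeInv f') {x : ℝ} (hx : 1 < x) :
    HasDerivAt (halfWeyl f) (halfWeyl f' x) x := by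
  obtain ⟨b, hb, hbx⟩ : ∃ b, 1 < b ∧ b < x := ⟨(1 + x) / 2, by linarith, by linarith⟩
  have hball : ∀ y ∈ Metric.ball x (x - b), b < y := fun y hy => by
    rw [Metric.mem_ball, dist_comm, Real.dist_eq] at hy
    linarith [le_abs_self (x - y)]
  obtain ⟨D, hD⟩ := hf_decay b hb
  obtain ⟨D', hD'⟩ := hf'_decay b hb
  have hmeas : ∀ y > 1,
      AEStronglyMeasurable (fun v => f (y + v ^ 2)) (volume.restrict (Ioi 0)) :=
    fun y hy => (continuous_iff_continuousAt.2 fun v =>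
      (hf _ (by nlinarith)).continuousAt.comp (by fun_prop)).aestronglyMeasurable
  -- `f'` agrees with the (always measurable) `deriv f` on the range of `v ↦ x + v ^ 2`.
  have hmeas' : AEStronglyMeasurable (fun v => f' (x + v ^ 2)) (volume.restrict (Ioi 0)) := by
    have : (fun v => f' (x + v ^ 2)) = fun v => deriv f (x + v ^ 2) := by
      ext v; exact ((hf _ (by nlinarith)).deriv).symm
    rw [this]
    exact ((measurable_deriv f).comp (by fun_prop)).aestronglyMeasurable
  refine (hasDerivAt_integral_of_dominated_loc_of_deriv_le
    (Metric.ball_mem_nhds x (sub_pos.2 hbx))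
    (F := fun y v => f (y + v ^ 2)) (F' := fun y v => f' (y + v ^ 2))
    (Filter.eventually_of_mem (Ioi_mem_nhds hx) hmeas) ?_ hmeas'
    (Filter.Eventually.of_forall fun v y hy => ?_)
    (integrable_inv_one_add_sq.const_mul D').integrableOn
    (Filter.Eventually.of_forall fun v y hy => ?_)).2
  · exact (integrable_inv_one_add_sq.const_mul D).integrableOn.mono' (hmeas x hx)
      (Filter.Eventually.of_forall (abs_comp_add_sq_le_of_le_div hb hD hbx.le))
  · exact abs_comp_add_sq_le_of_le_div hb hD' (hball y hy).le v
  · exact (hf (y + v ^ 2) (by nlinarith [hball y hy])).comp_add_const y (v ^ 2)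

theorem arcosh_le_sqrt_sq_sub_one {c : ℝ} (hc : 1 ≤ c) : arcosh c ≤ √(c ^ 2 - 1) :=
  sinh_arcosh hc ▸ self_le_sinh_iff.2 (arcosh_nonneg hc)

theorem sqrt_sq_sub_one_le_self {c : ℝ} (hc : 0 ≤ c) : √(c ^ 2 - 1) ≤ c :=
  (sqrt_le_sqrt (by linarith)).trans_eq (sqrt_sq hc)

theorem log_le_arcosh {c : ℝ} (hc : 1 ≤ c) : log c ≤ arcosh c := by
  rw [log_le_iff_le_exp (by linarith), exp_arcosh hc]
  linarith [sqrt_nonneg (c ^ 2 - 1)]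

theorem exp_neg_arcosh_sq_div_le {t c : ℝ} (ht : 0 < t) (hc : 1 ≤ c) (N : ℕ) :
    exp (-arcosh c ^ 2 / (4 * t)) ≤ exp (N ^ 2 * t) / c ^ N := by
  have hlog := log_le_arcosh hc
  have hN : (0 : ℝ) ≤ N := N.cast_nonneg
  -- complete the square: `a² ≥ 4Nt a - 4N²t²`
  have key : -arcosh c ^ 2 / (4 * t) ≤ N ^ 2 * t - N * log c := by
    rw [div_le_iff₀ (by positivity)]
    nlinarith [sq_nonneg (arcosh c - 2 * N * t), mul_le_mul_of_nonneg_left hlog hN]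
  calc exp (-arcosh c ^ 2 / (4 * t)) ≤ exp (N ^ 2 * t - N * log c) := exp_le_exp.2 key
    _ = exp (N ^ 2 * t) / c ^ N := by rw [exp_sub, exp_nat_mul, exp_log (by linarith)]

theorem decaysLikeInv_of_abs_le {f : ℝ → ℝ} {t M : ℝ} {n m : ℕ} (ht : 0 < t) (hM : 0 ≤ M)
    (hf : ∀ c > 1, |f c| ≤ exp (-arcosh c ^ 2 / (4 * t)) * (M * c ^ n) / √(c ^ 2 - 1) ^ m) :
    DecaysLikeInv f := by
  intro b hb
  have hq₀ : 0 < √(b ^ 2 - 1) := sqrt_pos.2 (by nlinarith)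
  refine ⟨M * exp (((n + 1 : ℕ) : ℝ) ^ 2 * t) / √(b ^ 2 - 1) ^ m, fun c hc => ?_⟩
  have hc₁ : 1 < c := hb.trans_le hc
  have hq : √(b ^ 2 - 1) ≤ √(c ^ 2 - 1) := sqrt_le_sqrt (by nlinarith)
  calc |f c| ≤ exp (-arcosh c ^ 2 / (4 * t)) * (M * c ^ n) / √(c ^ 2 - 1) ^ m := hf c hc₁
    _ ≤ exp (((n + 1 : ℕ) : ℝ) ^ 2 * t) / c ^ (n + 1) * (M * c ^ n) / √(b ^ 2 - 1) ^ m := by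
      gcongr
      exact exp_neg_arcosh_sq_div_le ht hc₁.le _
    _ = M * exp (((n + 1 : ℕ) : ℝ) ^ 2 * t) / √(b ^ 2 - 1) ^ m / c := by
      field_simp
      ring

/-- The profile of `K₃` in the variable `c = cosh s`:
`K₃ t s = (4πt)^(-3/2) e^(-t) k₃ t (cosh s)`; `k₃'` and `k₃''` are its first two derivatives
in `c`. -/
noncomputable def k₃ (t c : ℝ) : ℝ :=
  exp (-arcosh c ^ 2 / (4 * t)) * arcosh c / √(c ^ 2 - 1)

noncomputable def k₃' (t c : ℝ) : ℝ :=
  exp (-arcosh c ^ 2 / (4 * t)) *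
    (√(c ^ 2 - 1) - arcosh c ^ 2 * √(c ^ 2 - 1) / (2 * t) - arcosh c * c) / √(c ^ 2 - 1) ^ 3

noncomputable def k₃'' (t c : ℝ) : ℝ :=
  exp (-arcosh c ^ 2 / (4 * t)) *
    (arcosh c ^ 3 * √(c ^ 2 - 1) ^ 2 / (2 * t) ^ 2
      + 3 * arcosh c ^ 2 * c * √(c ^ 2 - 1) / (2 * t)
      - 3 * arcosh c * √(c ^ 2 - 1) ^ 2 / (2 * t) - 3 * c * √(c ^ 2 - 1)
      - arcosh c * √(c ^ 2 - 1) ^ 2 + 3 * arcosh c * c ^ 2) / √(c ^ 2 - 1) ^ 5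

section Profile

variable {t c : ℝ}

theorem hasDerivAt_sqrt_sq_sub_one (hc : 1 < c) :
    HasDerivAt (fun x => √(x ^ 2 - 1)) (c / √(c ^ 2 - 1)) c := by
  have h := ((hasDerivAt_pow 2 c).sub_const 1).sqrt (by nlinarith)
  exact h.congr_deriv (by field_simp; ring)

theorem hasDerivAt_exp_neg_arcosh_sq (hc : 1 < c) :
    HasDerivAt (fun x => exp (-arcosh x ^ 2 / (4 * t)))
      (exp (-arcosh c ^ 2 / (4 * t)) * (-arcosh c / (2 * t * √(c ^ 2 - 1)))) c := by
  refine (((hasDerivAt_arcosh hc).pow 2).neg.div_const (4 * t)).exp.congr_deriv ?_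
  simp only [Pi.neg_apply, Pi.pow_apply, Nat.cast_ofNat]
  ring

theorem hasDerivAt_k₃ (hc : 1 < c) : HasDerivAt (k₃ t) (k₃' t c) c := by
  have hq : 0 < √(c ^ 2 - 1) := sqrt_pos.2 (by nlinarith)
  refine (((hasDerivAt_exp_neg_arcosh_sq (t := t) hc).mul (hasDerivAt_arcosh hc)).div
    (hasDerivAt_sqrt_sq_sub_one hc) hq.ne').congr_deriv ?_
  simp only [k₃', Pi.mul_apply]
  field_simp
  ring

theorem hasDerivAt_k₃' (ht : t ≠ 0) (hc : 1 < c) : HasDerivAt (k₃' t) (k₃'' t c) c := by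
  have hq : 0 < √(c ^ 2 - 1) := sqrt_pos.2 (by nlinarith)
  have ha := hasDerivAt_arcosh hc
  have hs := hasDerivAt_sqrt_sq_sub_one hc
  refine (((hasDerivAt_exp_neg_arcosh_sq hc).mul
    ((hs.sub (((ha.pow 2).mul hs).div_const (2 * t))).sub (ha.mul (hasDerivAt_id c)))).div
    (hs.pow 3) (pow_ne_zero 3 hq.ne')).congr_deriv ?_
  simp only [k₃'', Pi.mul_apply, Pi.pow_apply, Pi.sub_apply, id]
  field_simp
  ring

theorem abs_k₃'_numerator_le {a q c τ : ℝ} (hτ : 0 < τ) (ha : 0 ≤ a) (hac : a ≤ c)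
    (hq : 0 ≤ q) (hqc : q ≤ c) (hc : 1 ≤ c) :
    |q - a ^ 2 * q / τ - a * c| ≤ (2 + 1 / τ) * c ^ 3 := by
  have h1 : q ≤ c ^ 3 := hqc.trans (le_self_pow₀ hc (by norm_num))
  have h2 : a ^ 2 * q ≤ c ^ 3 := by
    calc a ^ 2 * q ≤ c ^ 2 * c := by gcongr
      _ = c ^ 3 := by ring
  have h3 : a * c ≤ c ^ 3 := by
    calc a * c ≤ c * c := by gcongr
      _ ≤ c * c * c := le_mul_of_one_le_right (by positivity) hc
      _ = c ^ 3 := by ring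
  have e2 : a ^ 2 * q / τ ≤ c ^ 3 / τ := by gcongr
  have p2 : 0 ≤ a ^ 2 * q / τ := by positivity
  have p3 : 0 ≤ a * c := by positivity
  rw [show (2 + 1 / τ) * c ^ 3 = 2 * c ^ 3 + c ^ 3 / τ by ring, abs_le]
  constructor <;> linarith

theorem abs_k₃''_numerator_le {a q c τ : ℝ} (hτ : 0 < τ) (ha : 0 ≤ a) (hac : a ≤ c)
    (hq : 0 ≤ q) (hqc : q ≤ c) (hc : 1 ≤ c) :
    |a ^ 3 * q ^ 2 / τ ^ 2 + 3 * a ^ 2 * c * q / τ - 3 * a * q ^ 2 / τ - 3 * c * q - a * q ^ 2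
      + 3 * a * c ^ 2| ≤ (1 / τ ^ 2 + 6 / τ + 7) * c ^ 5 := by
  have hc2 : c ^ 2 ≤ c ^ 5 := pow_le_pow_right₀ hc (by norm_num)
  have hc3 : c ^ 3 ≤ c ^ 5 := pow_le_pow_right₀ hc (by norm_num)
  have hc4 : c ^ 4 ≤ c ^ 5 := pow_le_pow_right₀ hc (by norm_num)
  have h1 : a ^ 3 * q ^ 2 ≤ c ^ 5 := by
    calc a ^ 3 * q ^ 2 ≤ c ^ 3 * c ^ 2 := by gcongr
      _ = c ^ 5 := by ring
  have h2 : a ^ 2 * c * q ≤ c ^ 5 := by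
    calc a ^ 2 * c * q ≤ c ^ 2 * c * c := by gcongr
      _ ≤ c ^ 5 := by linarith
  have h3 : a * q ^ 2 ≤ c ^ 5 := by
    calc a * q ^ 2 ≤ c * c ^ 2 := by gcongr
      _ ≤ c ^ 5 := by linarith
  have h4 : c * q ≤ c ^ 5 := by
    calc c * q ≤ c * c := by gcongr
      _ ≤ c ^ 5 := by linarith
  have h5 : a * c ^ 2 ≤ c ^ 5 := by
    calc a * c ^ 2 ≤ c * c ^ 2 := by gcongr
      _ ≤ c ^ 5 := by linarith
  have e1 : a ^ 3 * q ^ 2 / τ ^ 2 ≤ c ^ 5 / τ ^ 2 := by gcongr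
  have e2 : 3 * a ^ 2 * c * q / τ ≤ 3 * c ^ 5 / τ :=
    div_le_div_of_nonneg_right (by linarith) hτ.le
  have e3 : 3 * a * q ^ 2 / τ ≤ 3 * c ^ 5 / τ := div_le_div_of_nonneg_right (by linarith) hτ.le
  have p1 : 0 ≤ a ^ 3 * q ^ 2 / τ ^ 2 := by positivity
  have p2 : 0 ≤ 3 * a ^ 2 * c * q / τ := by positivity
  have p3 : 0 ≤ 3 * a * q ^ 2 / τ := by positivity
  have p4 : 0 ≤ c * q := by positivity
  have p5 : 0 ≤ a * q ^ 2 := by positivity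
  have p6 : 0 ≤ a * c ^ 2 := by positivity
  rw [show (1 / τ ^ 2 + 6 / τ + 7) * c ^ 5
      = c ^ 5 / τ ^ 2 + 3 * c ^ 5 / τ + 3 * c ^ 5 / τ + 7 * c ^ 5 by ring, abs_le]
  constructor <;> linarith

theorem abs_gaussian_mul_div_le {P : ℝ → ℝ → ℝ} {M : ℝ} {n m : ℕ} (hc : 1 < c)
    (hP : ∀ a q, 0 ≤ a → a ≤ c → 0 ≤ q → q ≤ c → |P a q| ≤ M * c ^ n) :
    |exp (-arcosh c ^ 2 / (4 * t)) * P (arcosh c) (√(c ^ 2 - 1)) / √(c ^ 2 - 1) ^ m|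
      ≤ exp (-arcosh c ^ 2 / (4 * t)) * (M * c ^ n) / √(c ^ 2 - 1) ^ m := by
  have hq : 0 < √(c ^ 2 - 1) := sqrt_pos.2 (by nlinarith)
  rw [abs_div, abs_mul, abs_of_pos (exp_pos _), abs_of_pos (pow_pos hq m)]
  gcongr
  exact hP _ _ (arcosh_nonneg hc.le)
    ((arcosh_le_sqrt_sq_sub_one hc.le).trans (sqrt_sq_sub_one_le_self (by linarith)))
    hq.le (sqrt_sq_sub_one_le_self (by linarith))

theorem decaysLikeInv_k₃ (ht : 0 < t) : DecaysLikeInv (k₃ t) :=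
  decaysLikeInv_of_abs_le (M := 1) (n := 1) (m := 1) ht zero_le_one fun c hc => by
    simpa only [k₃, pow_one] using abs_gaussian_mul_div_le (P := fun a _ => a) (M := 1) (n := 1)
      (m := 1) (t := t) hc fun a _ ha hac _ _ => by rwa [abs_of_nonneg ha, pow_one, one_mul]

theorem decaysLikeInv_k₃' (ht : 0 < t) : DecaysLikeInv (k₃' t) :=
  decaysLikeInv_of_abs_le (n := 3) (m := 3) ht (by positivity) fun c hc =>
    abs_gaussian_mul_div_le (P := fun a q => q - a ^ 2 * q / (2 * t) - a * c) hc
      fun _ _ ha hac hq hqc => abs_k₃'_numerator_le (by positivity) ha hac hq hqc hc.le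

theorem decaysLikeInv_k₃'' (ht : 0 < t) : DecaysLikeInv (k₃'' t) :=
  decaysLikeInv_of_abs_le (n := 5) (m := 5) ht (by positivity) fun c hc =>
    abs_gaussian_mul_div_le (P := fun a q => a ^ 3 * q ^ 2 / (2 * t) ^ 2
        + 3 * a ^ 2 * c * q / (2 * t) - 3 * a * q ^ 2 / (2 * t) - 3 * c * q - a * q ^ 2
        + 3 * a * c ^ 2) hc
      fun _ _ ha hac hq hqc => abs_k₃''_numerator_le (by positivity) ha hac hq hqc hc.le

end Profile

theorem K₃_eq_mul_k₃_cosh (t : ℝ) {s : ℝ} (hs : 0 ≤ s) :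
    K₃ t s = (4 * π * t) ^ (-(3 : ℝ) / 2) * exp (-t) * k₃ t (cosh s) := by
  have hsinh : sinh s = √(cosh s ^ 2 - 1) := by
    rw [cosh_sq, add_sub_cancel_right, sqrt_sq (sinh_nonneg_iff.2 hs)]
  rw [K₃, k₃, arcosh_cosh hs, ← hsinh, show -t - s ^ 2 / (4 * t) = -t + -s ^ 2 / (4 * t) by ring,
    exp_add]
  ring

theorem K₂_eq_mul_halfWeyl (t : ℝ) {ρ : ℝ} (hρ : 0 ≤ ρ) :
    K₂ t ρ = 2 * (exp ((3 / 4) * t) * ((4 * π * t) ^ (-(3 : ℝ) / 2) * exp (-t))) *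
      halfWeyl (k₃ t) (cosh ρ) := by
  rw [K₂, show ∀ x y : ℝ, 2 * x * y = x * (2 * y) from fun _ _ => by ring,
    ← integral_comp_cosh_mul_sinh_mul_rpow _ hρ, ← integral_const_mul]
  refine setIntegral_congr_fun measurableSet_Ioi fun s hs => ?_
  rw [K₃_eq_mul_k₃_cosh t (hρ.trans hs.le)]
  ring

theorem deriv_deriv_sub_coth_mul_deriv_K₃ {t s : ℝ} (ht : 0 < t) (hs : 0 < s) :
    deriv (deriv (fun u => K₃ t u)) s - cosh s / sinh s * deriv (fun u => K₃ t u) s =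
      (4 * π * t) ^ (-(3 : ℝ) / 2) * exp (-t) * k₃'' t (cosh s) * sinh s ^ 2 :=
  deriv_deriv_sub_coth_mul_deriv_of_comp_cosh (fun _ hs => K₃_eq_mul_k₃_cosh t hs.le)
    (fun _ hc => (hasDerivAt_k₃ hc).const_mul _)
    (fun _ hc => (hasDerivAt_k₃' ht.ne' hc).const_mul _) hs

theorem deriv_deriv_sub_coth_mul_deriv_K₂ {t ρ : ℝ} (ht : 0 < t) (hρ : 0 < ρ) :
    deriv (deriv (fun r => K₂ t r)) ρ - cosh ρ / sinh ρ * deriv (fun r => K₂ t r) ρ =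
      2 * (exp ((3 / 4) * t) * ((4 * π * t) ^ (-(3 : ℝ) / 2) * exp (-t))) *
        halfWeyl (k₃'' t) (cosh ρ) * sinh ρ ^ 2 :=
  deriv_deriv_sub_coth_mul_deriv_of_comp_cosh (fun _ hr => K₂_eq_mul_halfWeyl t hr.le)
    (fun _ hc => (hasDerivAt_halfWeyl (fun _ => hasDerivAt_k₃) (decaysLikeInv_k₃ ht)
      (decaysLikeInv_k₃' ht) hc).const_mul _)
    (fun _ hc => (hasDerivAt_halfWeyl (fun _ => hasDerivAt_k₃' ht.ne') (decaysLikeInv_k₃' ht)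
      (decaysLikeInv_k₃'' ht) hc).const_mul _) hρ

theorem stmt_17 (t : ℝ) (ht : 0 < t) (ρ : ℝ) (hρ : 0 < ρ) :
    deriv (deriv (fun r => K₂ t r)) ρ -
        (Real.cosh ρ / Real.sinh ρ) * deriv (fun r => K₂ t r) ρ =
      ∫ s in Set.Ioi ρ,
        Real.exp ((3 / 4) * t) *
          (deriv (deriv (fun u => K₃ t u)) s -
            (Real.cosh s / Real.sinh s) * deriv (fun u => K₃ t u) s) *
          ((Real.sinh ρ) ^ 2 / Real.sinh s) *
          (Real.cosh s - Real.cosh ρ) ^ (-(1 : ℝ) / 2) := by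
  have hintegrand : ∀ s ∈ Ioi ρ,
      exp ((3 / 4) * t) * (deriv (deriv (fun u => K₃ t u)) s -
        cosh s / sinh s * deriv (fun u => K₃ t u) s) * (sinh ρ ^ 2 / sinh s) *
          (cosh s - cosh ρ) ^ (-(1 : ℝ) / 2)
      = exp ((3 / 4) * t) * ((4 * π * t) ^ (-(3 : ℝ) / 2) * exp (-t)) * sinh ρ ^ 2 *
          (k₃'' t (cosh s) * sinh s * (cosh s - cosh ρ) ^ (-(1 : ℝ) / 2)) := fun s hs => by
    rw [deriv_deriv_sub_coth_mul_deriv_K₃ ht (hρ.trans hs)]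
    field_simp [(sinh_pos_iff.2 (hρ.trans hs)).ne']
  rw [deriv_deriv_sub_coth_mul_deriv_K₂ ht hρ, setIntegral_congr_fun measurableSet_Ioi hintegrand,
    integral_const_mul, integral_comp_cosh_mul_sinh_mul_rpow _ hρ.le]
  ring
end
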